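/- arXiv:2311.03946 — 3 statements merged into one kernel-verified Lean document; each statement's English description precedes it below -/
import Mathlib

section
/- For real λ > 0 and real v, the Fourier transform of the function w ↦ (2 cosh(w/2))^{-λ} satisfies ∫_{ℝ} e^{i v w} / (2 cosh(w/2))^λ dw = Γ(λ/2 + i v) Γ(λ/2 − i v) / Γ(λ). -/
open MeasureTheory Set

/-- Complex power of a positive real, as an exponential. -/
lemma cpow_pos_real {x : ℝ} (hx : 0 < x) (s : ℂ) :
    ((x : ℝ) : ℂ) ^ s = Complex.exp (s * (Real.log x : ℂ)) := by
  rw [Complex.cpow_def_of_ne_zero (by exact_mod_cast hx.ne'), ← Complex.ofReal_log hx.le,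
    mul_comm]

/-- Fourier transform of `w ↦ (2 cosh(w/2))^{-λ}`:
`∫ e^{ivw} / (2 cosh(w/2))^λ dw = Γ(λ/2 + iv) Γ(λ/2 − iv) / Γ(λ)`. -/
theorem fourier_cosh_pow (l v : ℝ) (hl : 0 < l) :
    ∫ w : ℝ, Complex.exp (Complex.I * v * w) / (((2 * Real.cosh (w / 2)) ^ l : ℝ) : ℂ) =
      Complex.Gamma ((l : ℂ) / 2 + Complex.I * v) * Complex.Gamma ((l : ℂ) / 2 - Complex.I * v) /
        Complex.Gamma (l : ℂ) := by
  set a : ℂ := (l : ℂ) / 2 + Complex.I * v with ha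
  set b : ℂ := (l : ℂ) / 2 - Complex.I * v with hb
  have hare : 0 < a.re := by
    rw [ha]
    simp [Complex.add_re, Complex.div_re]
    positivity
  have hbre : 0 < b.re := by
    rw [hb]
    simp [Complex.sub_re, Complex.div_re]
    positivity
  have hab : a + b = (l : ℂ) := by rw [ha, hb]; ring
  -- the substitution map
  set f : ℝ → ℝ := fun w => (1 + Real.exp (-w))⁻¹ with hf
  set f' : ℝ → ℝ := fun w => Real.exp (-w) / (1 + Real.exp (-w)) ^ 2 with hf'
  have hEpos : ∀ w : ℝ, 0 < 1 + Real.exp (-w) := fun w => by positivity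
  have hderiv : ∀ w ∈ (univ : Set ℝ), HasDerivWithinAt f (f' w) univ w := by
    intro w _
    have h1 : HasDerivAt (fun w : ℝ => 1 + Real.exp (-w)) (-Real.exp (-w)) w := by
      simpa using ((Real.hasDerivAt_exp (-w)).comp w (hasDerivAt_neg w)).const_add 1
    have h2 := h1.inv (ne_of_gt (hEpos w))
    have h3 : HasDerivAt f (Real.exp (-w) / (1 + Real.exp (-w)) ^ 2) w := by
      rw [neg_neg] at h2
      exact h2
    exact h3.hasDerivWithinAt
  have hinj : InjOn f univ := by
    intro w1 _ w2 _ h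
    have h2 : 1 + Real.exp (-w1) = 1 + Real.exp (-w2) := inv_injective h
    have h3 : Real.exp (-w1) = Real.exp (-w2) := by linarith
    have h4 := Real.exp_injective h3
    linarith
  have himg : f '' univ = Ioo (0 : ℝ) 1 := by
    rw [image_univ]
    ext t
    constructor
    · rintro ⟨w, rfl⟩
      refine ⟨by positivity, ?_⟩
      have hw := Real.exp_pos (-w)
      rw [hf, inv_lt_one_iff₀]
      right; linarith
    · rintro ⟨ht0, ht1⟩
      refine ⟨Real.log (t / (1 - t)), ?_⟩
      have h1t : 0 < 1 - t := by linarith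
      have hx : 0 < t / (1 - t) := by positivity
      have hE : Real.exp (-(Real.log (t / (1 - t)))) = (1 - t) / t := by
        rw [Real.exp_neg, Real.exp_log hx]
        rw [inv_div]
      rw [hf]
      simp only [hE]
      field_simp
      ring
  -- the integrand of the beta integral
  set g : ℝ → ℂ := fun x => (x : ℂ) ^ (a - 1) * (1 - (x : ℂ)) ^ (b - 1) with hg
  -- key pointwise identity
  have hpt : ∀ w : ℝ, |f' w| • g (f w)
      = Complex.exp (Complex.I * v * w) / (((2 * Real.cosh (w / 2)) ^ l : ℝ) : ℂ) := by
    intro w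
    set E : ℝ := Real.exp (-w) with hE
    have hE0 : 0 < E := Real.exp_pos _
    have h1E : 0 < 1 + E := by positivity
    have hcosh : 0 < 2 * Real.cosh (w / 2) := by positivity
    have habs : |f' w| = E / (1 + E) ^ 2 := abs_of_pos (by positivity)
    have hfw : f w = ((1 + E)⁻¹ : ℝ) := rfl
    have hC : (1 : ℂ) + (E : ℂ) ≠ 0 := by exact_mod_cast h1E.ne'
    -- express the left side as a single exponential
    have lhs_eq : |f' w| • g (f w)
        = Complex.exp ((1 : ℂ) * (Real.log (E / (1 + E) ^ 2) : ℂ)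
            + ((a - 1) * (Real.log ((1 + E)⁻¹) : ℂ)
              + (b - 1) * (Real.log (E / (1 + E)) : ℂ))) := by
      rw [hg]
      simp only [Complex.real_smul, habs]
      rw [show ((f w : ℝ) : ℂ) = (((1 + E)⁻¹ : ℝ) : ℂ) by rw [hfw]]
      rw [show (1 : ℂ) - (((1 + E)⁻¹ : ℝ) : ℂ) = ((E / (1 + E) : ℝ) : ℂ) by
        push_cast; field_simp; ring]
      rw [show ((E / (1 + E) ^ 2 : ℝ) : ℂ)
          = Complex.exp ((1 : ℂ) * (Real.log (E / (1 + E) ^ 2) : ℂ)) by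
        rw [← cpow_pos_real (by positivity : (0:ℝ) < E / (1 + E) ^ 2) 1, Complex.cpow_one]]
      rw [cpow_pos_real (by positivity : (0:ℝ) < (1 + E)⁻¹) (a - 1),
        cpow_pos_real (by positivity : (0:ℝ) < E / (1 + E)) (b - 1),
        Complex.exp_add, Complex.exp_add]
    -- express the right side as an exponential
    have rhs_eq : Complex.exp (Complex.I * v * w) / (((2 * Real.cosh (w / 2)) ^ l : ℝ) : ℂ)
        = Complex.exp (Complex.I * v * w
            - (l : ℂ) * (Real.log (2 * Real.cosh (w / 2)) : ℂ)) := by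
      rw [Complex.ofReal_cpow hcosh.le, cpow_pos_real hcosh (l : ℂ), Complex.exp_sub]
    rw [lhs_eq, rhs_eq]
    congr 1
    -- compute the real logarithms
    have hh1 : Real.exp (-(w / 2)) * Real.exp (w / 2) = 1 := by
      rw [← Real.exp_add]; norm_num
    have hh2 : Real.exp (-(w / 2)) * Real.exp (-(w / 2)) = E := by
      rw [← Real.exp_add, hE]; ring_nf
    have hsplit : (1 + E : ℝ) = Real.exp (-(w / 2)) * (2 * Real.cosh (w / 2)) := by
      rw [Real.cosh_eq,
        show 2 * ((Real.exp (w / 2) + Real.exp (-(w / 2))) / 2)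
          = Real.exp (w / 2) + Real.exp (-(w / 2)) by ring,
        mul_add, hh1, hh2]
    have hlogE : Real.log E = -w := by rw [hE, Real.log_exp]
    have hlog1E : Real.log (1 + E) = -(w / 2) + Real.log (2 * Real.cosh (w / 2)) := by
      rw [hsplit, Real.log_mul (Real.exp_pos _).ne' hcosh.ne', Real.log_exp]
    have hlog0 : Real.log (E / (1 + E) ^ 2) = Real.log E - 2 * Real.log (1 + E) := by
      rw [Real.log_div hE0.ne' (by positivity), Real.log_pow]
      push_cast; ring
    have hloginv : Real.log ((1 + E)⁻¹ : ℝ) = -Real.log (1 + E) := Real.log_inv _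
    have hlog2 : Real.log (E / (1 + E)) = Real.log E - Real.log (1 + E) :=
      Real.log_div hE0.ne' h1E.ne'
    rw [hlog0, hloginv, hlog2, hlogE, hlog1E, ha, hb]
    push_cast
    ring
  -- change of variables
  have hcalc : Complex.betaIntegral a b
      = ∫ w : ℝ, Complex.exp (Complex.I * v * w) / (((2 * Real.cosh (w / 2)) ^ l : ℝ) : ℂ) := by
    calc Complex.betaIntegral a b = ∫ x in Ioo (0 : ℝ) 1, g x := by
          rw [Complex.betaIntegral, intervalIntegral.integral_of_le zero_le_one,
            MeasureTheory.integral_Ioc_eq_integral_Ioo]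
      _ = ∫ w in (univ : Set ℝ), |f' w| • g (f w) := by
          rw [← himg]
          exact integral_image_eq_integral_abs_deriv_smul MeasurableSet.univ hderiv hinj g
      _ = ∫ w : ℝ, Complex.exp (Complex.I * v * w) / (((2 * Real.cosh (w / 2)) ^ l : ℝ) : ℂ) := by
          rw [Measure.restrict_univ]
          exact integral_congr_ae (Filter.Eventually.of_forall hpt)
  have hGamma := Complex.Gamma_mul_Gamma_eq_betaIntegral hare hbre
  rw [hab] at hGamma
  have hne : Complex.Gamma (l : ℂ) ≠ 0 :=
    Complex.Gamma_ne_zero_of_re_pos (by simpa using hl)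
  rw [← hcalc, eq_div_iff hne, hGamma]
  ring
end

section
/- Let λ > 0 and let K_N(t, s) = ∏_{i,j=1}^N (2 cosh((t_i − s_j)/2))^{-λ} for t, s ∈ ℝ^N. Suppose f : G_N → ℂ is measurable and satisfies |f(s)| ≤ C e^{(ρ, s)} ∏_{1 ≤ i < j ≤ N}(1 + s_j − s_i) on the Weyl chamber G_N, where ρ_k = (λ/2)(N + 1 − 2k). Then for each fixed t ∈ ℝ^N the function s ↦ K_N(t, s) · f(s) · W_N(λ; s) is integrable over G_N, where W_N(λ; s) = ∏_{i<j}(4 sinh²((s_i − s_j)/2))^λ. -/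
open MeasureTheory

private lemma integrable_exp_neg_mul_abs_aux {a : ℝ} (ha : 0 < a) :
    Integrable (fun x : ℝ => Real.exp (-(a * |x|))) := by
  have h1 : IntegrableOn (fun x : ℝ => Real.exp (-(a * |x|))) (Set.Ioi 0) := by
    refine ((exp_neg_integrableOn_Ioi 0 ha).congr_fun (fun x hx => ?_) measurableSet_Ioi)
    rw [abs_of_pos hx, ← neg_mul]
  have h2 : IntegrableOn (fun x : ℝ => Real.exp (-(a * |x|))) (Set.Iic 0) := by
    have m : MeasurableEmbedding (Neg.neg : ℝ → ℝ) := (Homeomorph.neg ℝ).measurableEmbedding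
    have h3 : IntegrableOn (fun x : ℝ => Real.exp (-(a * |x|))) (Set.Iic 0)
        (Measure.map Neg.neg volume) := by
      rw [m.integrableOn_map_iff]
      have hpre : (Neg.neg : ℝ → ℝ) ⁻¹' Set.Iic 0 = Set.Ici 0 := by
        ext x; simp
      have hcomp : ((fun x : ℝ => Real.exp (-(a * |x|))) ∘ (Neg.neg : ℝ → ℝ)) =
          fun x : ℝ => Real.exp (-(a * |x|)) := by
        funext x; simp [Function.comp_def, abs_neg]
      rw [hpre, hcomp]
      exact Iff.mpr integrableOn_Ici_iff_integrableOn_Ioi h1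
    rwa [Measure.map_neg_eq_self] at h3
  have := h2.union h1
  rwa [Set.Iic_union_Ioi, integrableOn_univ] at this

private lemma poly_le_exp_aux {n : ℕ} (hn : 0 < n) {l u : ℝ} (hl : 0 < l) (hu : 0 ≤ u) :
    (1 + u) ^ (n ^ 2) * Real.exp (-(l / 2) * u) ≤
      (1 + 4 * (n : ℝ) ^ 2 / l) ^ (n ^ 2) * Real.exp (-(l / 4) * u) := by
  set ε : ℝ := l / (4 * (n : ℝ) ^ 2) with hε
  have hnR : (0:ℝ) < (n : ℝ) := by exact_mod_cast hn
  have hεpos : 0 < ε := by positivity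
  have h1 : 1 + u ≤ (1 + 4 * (n : ℝ) ^ 2 / l) * Real.exp (ε * u) := by
    have he1 : 1 ≤ Real.exp (ε * u) := Real.one_le_exp (by positivity)
    have he2 : ε * u + 1 ≤ Real.exp (ε * u) := Real.add_one_le_exp _
    have hinv : 4 * (n : ℝ) ^ 2 / l = 1 / ε := by
      rw [hε]; field_simp
    rw [hinv]
    have h3 : 1 / ε * (ε * u) ≤ 1 / ε * Real.exp (ε * u) := by
      apply mul_le_mul_of_nonneg_left (le_trans (by linarith) he2) (by positivity)
    have h4 : 1 / ε * (ε * u) = u := by field_simp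
    nlinarith
  have h2 : (1 + u) ^ (n ^ 2) ≤
      ((1 + 4 * (n : ℝ) ^ 2 / l) * Real.exp (ε * u)) ^ (n ^ 2) :=
    pow_le_pow_left₀ (by linarith) h1 _
  have h3 : ((1 + 4 * (n : ℝ) ^ 2 / l) * Real.exp (ε * u)) ^ (n ^ 2) =
      (1 + 4 * (n : ℝ) ^ 2 / l) ^ (n ^ 2) * Real.exp ((l / 4) * u) := by
    rw [mul_pow, ← Real.exp_nat_mul]
    congr 2
    have : ((n : ℝ) ^ 2) ≠ 0 := by positivity
    push_cast
    rw [hε]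
    field_simp
  calc (1 + u) ^ (n ^ 2) * Real.exp (-(l / 2) * u)
      ≤ (1 + 4 * (n : ℝ) ^ 2 / l) ^ (n ^ 2) * Real.exp ((l / 4) * u) *
          Real.exp (-(l / 2) * u) := by
        apply mul_le_mul_of_nonneg_right _ (Real.exp_nonneg _)
        rw [← h3]; exact h2
    _ = (1 + 4 * (n : ℝ) ^ 2 / l) ^ (n ^ 2) * Real.exp (-(l / 4) * u) := by
        rw [mul_assoc, ← Real.exp_add]
        congr 2
        ring

set_option maxHeartbeats 2000000 in
/-- If `|f(s)| ≤ C e^{(ρ,s)} ∏_{i<j}(1 + s_j − s_i)` on the Weyl chamber, then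
`s ↦ K_N(t,s) f(s) W_N(λ;s)` is integrable over the Weyl chamber, where
`K_N(t,s) = ∏_{i,j} (2 cosh((t_i − s_j)/2))^{-λ}` and
`W_N(λ;s) = ∏_{i<j} (4 sinh²((s_i − s_j)/2))^λ`. -/
theorem integrand_integrable (N : ℕ) (hN : 1 ≤ N) (l : ℝ) (hl : 0 < l)
    (ρ : Fin N → ℝ) (hρ : ∀ k, ρ k = l / 2 * ((N : ℝ) - 1 - 2 * ((k : ℕ) : ℝ)))
    (C : ℝ) (hC : 0 < C) (f : (Fin N → ℝ) → ℂ) (hf : Measurable f)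
    (hb : ∀ s : Fin N → ℝ, StrictMono s →
      ‖f s‖ ≤ C * Real.exp (∑ k : Fin N, ρ k * s k) *
        ∏ i : Fin N, ∏ j ∈ Finset.Ioi i, (1 + (s j - s i)))
    (t : Fin N → ℝ) :
    IntegrableOn
      (fun s : Fin N → ℝ =>
        ((∏ i : Fin N, ∏ j : Fin N, (2 * Real.cosh ((t i - s j) / 2)) ^ (-l) : ℝ) : ℂ) *
          f s *
          ((∏ i : Fin N, ∏ j ∈ Finset.Ioi i,
              (4 * Real.sinh ((s i - s j) / 2) ^ 2) ^ l : ℝ) : ℂ))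
      {s : Fin N → ℝ | StrictMono s} := by
  classical
  set S : Set (Fin N → ℝ) := {s : Fin N → ℝ | StrictMono s} with hS
  set T : ℝ := ∑ i : Fin N, |t i| with hT
  set M : ℝ := (1 + 4 * (N : ℝ) ^ 2 / l) ^ (N ^ 2) with hM
  set B : ℝ := C * Real.exp (l * N / 2 * T) * M ^ N with hB
  have hSm : MeasurableSet S := by
    have : S = ⋂ (i : Fin N), ⋂ (j : Fin N), ⋂ (_ : i < j), {s : Fin N → ℝ | s i < s j} := by
      ext s
      simp only [hS, Set.mem_setOf_eq, Set.mem_iInter]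
      exact ⟨fun h i j hij => h hij, fun h a b hab => h a b hab⟩
    rw [this]
    exact MeasurableSet.iInter fun i => MeasurableSet.iInter fun j =>
      MeasurableSet.iInter fun _ =>
        measurableSet_lt (measurable_pi_apply i) (measurable_pi_apply j)
  -- dominating function
  have hg : Integrable (fun s : Fin N → ℝ => B * ∏ k : Fin N, Real.exp (-(l / 4) * |s k|)) := by
    have : Integrable (fun s : Fin N → ℝ => ∏ k : Fin N,
        Real.exp (-(l / 4 * |s k|))) :=
      Integrable.fintype_prod (f := fun (_ : Fin N) (x : ℝ) => Real.exp (-(l / 4 * |x|)))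
        (fun _ => integrable_exp_neg_mul_abs_aux (by positivity))
    refine (this.const_mul B).congr (Filter.Eventually.of_forall fun s => ?_)
    simp only [neg_mul]
  -- measurability
  have hmeas : Measurable (fun s : Fin N → ℝ =>
      ((∏ i : Fin N, ∏ j : Fin N, (2 * Real.cosh ((t i - s j) / 2)) ^ (-l) : ℝ) : ℂ) *
        f s *
        ((∏ i : Fin N, ∏ j ∈ Finset.Ioi i,
            (4 * Real.sinh ((s i - s j) / 2) ^ 2) ^ l : ℝ) : ℂ)) := by
    have hK : Measurable fun s : Fin N → ℝ =>
        ∏ i : Fin N, ∏ j : Fin N, (2 * Real.cosh ((t i - s j) / 2)) ^ (-l) :=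
      Finset.measurable_prod _ fun i _ => Finset.measurable_prod _ fun j _ =>
        (((measurable_const.sub (measurable_pi_apply j)).div_const 2).cosh.const_mul 2).pow_const
          (-l)
    have hW : Measurable fun s : Fin N → ℝ =>
        ∏ i : Fin N, ∏ j ∈ Finset.Ioi i, (4 * Real.sinh ((s i - s j) / 2) ^ 2) ^ l :=
      Finset.measurable_prod _ fun i _ => Finset.measurable_prod _ fun j _ =>
        ((((measurable_pi_apply i).sub (measurable_pi_apply j)).div_const 2).sinh.pow_const
          2).const_mul 4 |>.pow_const l
    exact ((Complex.measurable_ofReal.comp hK).mul hf).mul (Complex.measurable_ofReal.comp hW)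
  -- pointwise bound
  have key : ∀ s : Fin N → ℝ, StrictMono s →
      ‖((∏ i : Fin N, ∏ j : Fin N, (2 * Real.cosh ((t i - s j) / 2)) ^ (-l) : ℝ) : ℂ) *
          f s *
          ((∏ i : Fin N, ∏ j ∈ Finset.Ioi i,
              (4 * Real.sinh ((s i - s j) / 2) ^ 2) ^ l : ℝ) : ℂ)‖ ≤
        B * ∏ k : Fin N, Real.exp (-(l / 4) * |s k|) := by
    intro s hs
    set Sm : ℝ := ∑ k : Fin N, |s k| with hSm2
    set R : ℝ := ∑ k : Fin N, ρ k * s k with hR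
    have hKnn : (0:ℝ) ≤ ∏ i : Fin N, ∏ j : Fin N, (2 * Real.cosh ((t i - s j) / 2)) ^ (-l) :=
      Finset.prod_nonneg fun i _ => Finset.prod_nonneg fun j _ =>
        Real.rpow_nonneg (by positivity) _
    have hWnn : (0:ℝ) ≤ ∏ i : Fin N, ∏ j ∈ Finset.Ioi i,
        (4 * Real.sinh ((s i - s j) / 2) ^ 2) ^ l :=
      Finset.prod_nonneg fun i _ => Finset.prod_nonneg fun j _ =>
        Real.rpow_nonneg (by positivity) _
    -- step A : kernel bound
    have hKb : (∏ i : Fin N, ∏ j : Fin N, (2 * Real.cosh ((t i - s j) / 2)) ^ (-l)) ≤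
        Real.exp (l * N / 2 * T - l * N / 2 * Sm) := by
      have hfac : ∀ i j : Fin N, (2 * Real.cosh ((t i - s j) / 2)) ^ (-l) ≤
          Real.exp (l / 2 * |t i| - l / 2 * |s j|) := by
        intro i j
        have habs : |t i - s j| / 2 = |(t i - s j) / 2| := by
          rw [abs_div]; norm_num
        have hc : Real.exp (|t i - s j| / 2) ≤ 2 * Real.cosh ((t i - s j) / 2) := by
          rw [habs, Real.cosh_eq]
          rcases abs_cases ((t i - s j) / 2) with ⟨h, _⟩ | ⟨h, _⟩ <;> rw [h] <;>
            nlinarith [Real.exp_pos ((t i - s j) / 2), Real.exp_pos (-((t i - s j) / 2))]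
        have h1 : (2 * Real.cosh ((t i - s j) / 2)) ^ (-l) ≤
            (Real.exp (|t i - s j| / 2)) ^ (-l) :=
          Real.rpow_le_rpow_of_nonpos (Real.exp_pos _) hc (neg_nonpos.mpr hl.le)
        rw [← Real.exp_mul] at h1
        refine h1.trans (Real.exp_le_exp.mpr ?_)
        have := abs_sub_abs_le_abs_sub (s j) (t i)
        rw [abs_sub_comm] at this
        nlinarith
      calc (∏ i : Fin N, ∏ j : Fin N, (2 * Real.cosh ((t i - s j) / 2)) ^ (-l))
          ≤ ∏ i : Fin N, ∏ j : Fin N, Real.exp (l / 2 * |t i| - l / 2 * |s j|) := by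
            refine Finset.prod_le_prod (fun i _ => Finset.prod_nonneg fun j _ =>
              Real.rpow_nonneg (by positivity) _) (fun i _ => ?_)
            exact Finset.prod_le_prod (fun j _ => Real.rpow_nonneg (by positivity) _)
              (fun j _ => hfac i j)
        _ = Real.exp (∑ i : Fin N, ∑ j : Fin N, (l / 2 * |t i| - l / 2 * |s j|)) := by
            rw [Real.exp_sum]
            exact Finset.prod_congr rfl fun i _ => (Real.exp_sum _ _).symm
        _ = Real.exp (l * N / 2 * T - l * N / 2 * Sm) := by
            congr 1
            simp only [Finset.sum_sub_distrib, Finset.sum_const, Finset.card_univ,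
              Fintype.card_fin, nsmul_eq_mul, ← Finset.mul_sum, ← Finset.sum_mul, hT, hSm2]
            ring
    -- step B : f bound with polynomial
    have hQ1 : (1:ℝ) ≤ ∏ k : Fin N, (1 + |s k|) := by
      calc (1:ℝ) = ∏ _k : Fin N, (1:ℝ) := by rw [Finset.prod_const_one]
        _ ≤ ∏ k : Fin N, (1 + |s k|) :=
          Finset.prod_le_prod (fun _ _ => zero_le_one)
            (fun k _ => by linarith [abs_nonneg (s k)])
    have hPb : (∏ i : Fin N, ∏ j ∈ Finset.Ioi i, (1 + (s j - s i))) ≤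
        (∏ k : Fin N, (1 + |s k|)) ^ (N ^ 2) := by
      set Q : ℝ := ∏ k : Fin N, (1 + |s k|) with hQ
      have step1 : (∏ i : Fin N, ∏ j ∈ Finset.Ioi i, (1 + (s j - s i))) ≤
          ∏ i : Fin N, ∏ j ∈ Finset.Ioi i, Q := by
        refine Finset.prod_le_prod (fun i _ => Finset.prod_nonneg fun j hj => ?_)
          (fun i _ => Finset.prod_le_prod (fun j hj => ?_) (fun j hj => ?_))
        · have := hs (Finset.mem_Ioi.mp hj); linarith
        · have := hs (Finset.mem_Ioi.mp hj); linarith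
        · have hij : i < j := Finset.mem_Ioi.mp hj
          have h1 : 1 + (s j - s i) ≤ (1 + |s i|) * (1 + |s j|) := by
            nlinarith [abs_nonneg (s i), abs_nonneg (s j), le_abs_self (s j),
              neg_abs_le (s i)]
          refine h1.trans ?_
          have : (1 + |s i|) * (1 + |s j|) = ∏ k ∈ ({i, j} : Finset (Fin N)), (1 + |s k|) := by
            rw [Finset.prod_pair (ne_of_lt hij)]
          rw [this, hQ]
          have hcompl : (1:ℝ) ≤ ∏ k ∈ ({i, j} : Finset (Fin N))ᶜ, (1 + |s k|) := by
            calc (1:ℝ) = ∏ _k ∈ ({i, j} : Finset (Fin N))ᶜ, (1:ℝ) :=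
                  (Finset.prod_const_one).symm
              _ ≤ _ := Finset.prod_le_prod (fun _ _ => zero_le_one)
                  (fun k _ => by linarith [abs_nonneg (s k)])
          rw [← Finset.prod_mul_prod_compl ({i, j} : Finset (Fin N)) (fun k => 1 + |s k|)]
          exact le_mul_of_one_le_right
            (Finset.prod_nonneg fun k _ => by positivity) hcompl
      refine step1.trans ?_
      have step2 : (∏ i : Fin N, ∏ j ∈ Finset.Ioi i, Q) =
          Q ^ (∑ i : Fin N, (Finset.Ioi i).card) := by
        simp_rw [Finset.prod_const]
        rw [Finset.prod_pow_eq_pow_sum]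
      rw [step2]
      refine pow_le_pow_right₀ hQ1 ?_
      calc (∑ i : Fin N, (Finset.Ioi i).card) ≤ ∑ _i : Fin N, N :=
            Finset.sum_le_sum fun i _ => (Finset.card_le_univ _).trans_eq
              (by simp [Finset.card_univ])
        _ = N ^ 2 := by simp [Finset.sum_const, Finset.card_univ, sq]
    -- step C : W bound
    have hWb : (∏ i : Fin N, ∏ j ∈ Finset.Ioi i, (4 * Real.sinh ((s i - s j) / 2) ^ 2) ^ l) ≤
        Real.exp (-2 * R) := by
      have hfac : ∀ i j : Fin N, i < j →
          (4 * Real.sinh ((s i - s j) / 2) ^ 2) ^ l ≤ Real.exp (l * (s j - s i)) := by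
        intro i j hij
        set y : ℝ := (s i - s j) / 2 with hy
        have hylt : y < 0 := by
          have := hs hij; rw [hy]; linarith
        have h4 : 4 * Real.sinh y ^ 2 ≤ Real.exp (s j - s i) := by
          have hsinh : Real.sinh y = (Real.exp y - Real.exp (-y)) / 2 := Real.sinh_eq y
          have hexp : Real.exp (s j - s i) = Real.exp (-y) * Real.exp (-y) := by
            rw [← Real.exp_add]; congr 1; rw [hy]; ring
          rw [hsinh, hexp]
          have h1 : Real.exp y < Real.exp (-y) := Real.exp_lt_exp.mpr (by linarith)
          nlinarith [Real.exp_pos y, Real.exp_pos (-y)]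
        calc (4 * Real.sinh y ^ 2) ^ l ≤ (Real.exp (s j - s i)) ^ l :=
              Real.rpow_le_rpow (by positivity) h4 hl.le
          _ = Real.exp ((s j - s i) * l) := (Real.exp_mul _ _).symm
          _ = Real.exp (l * (s j - s i)) := by rw [mul_comm]
      have hid : (∑ i : Fin N, ∑ j ∈ Finset.Ioi i, l * (s j - s i)) = -2 * R := by
        have swap : (∑ i : Fin N, ∑ j ∈ Finset.Ioi i, s j) =
            ∑ j : Fin N, ∑ i ∈ Finset.Iio j, s j := by
          refine Finset.sum_comm' fun x y => ?_
          simp [Finset.mem_Ioi, Finset.mem_Iio]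
        have e1 : (∑ i : Fin N, ∑ j ∈ Finset.Ioi i, s j) =
            ∑ j : Fin N, ((j : ℕ) : ℝ) * s j := by
          rw [swap]
          refine Finset.sum_congr rfl fun j _ => ?_
          rw [Finset.sum_const, Fin.card_Iio, nsmul_eq_mul]
        have e2 : ∀ i : Fin N, (∑ j ∈ Finset.Ioi i, s i) =
            ((N : ℝ) - 1 - ((i : ℕ) : ℝ)) * s i := by
          intro i
          rw [Finset.sum_const, Fin.card_Ioi, nsmul_eq_mul]
          congr 1
          have h1 : (i : ℕ) ≤ N - 1 := Nat.le_sub_one_of_lt i.isLt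
          rw [Nat.cast_sub h1, Nat.cast_sub hN]
          norm_num
        have expand : (∑ i : Fin N, ∑ j ∈ Finset.Ioi i, l * (s j - s i)) =
            l * ((∑ i : Fin N, ∑ j ∈ Finset.Ioi i, s j) -
              ∑ i : Fin N, ∑ j ∈ Finset.Ioi i, s i) := by
          rw [mul_sub, Finset.mul_sum, Finset.mul_sum, ← Finset.sum_sub_distrib]
          refine Finset.sum_congr rfl fun i _ => ?_
          rw [Finset.mul_sum, Finset.mul_sum, ← Finset.sum_sub_distrib]
          exact Finset.sum_congr rfl fun j _ => by ring
        have e2' : (∑ i : Fin N, ∑ j ∈ Finset.Ioi i, s i) =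
            ∑ i : Fin N, ((N : ℝ) - 1 - ((i : ℕ) : ℝ)) * s i :=
          Finset.sum_congr rfl fun i _ => e2 i
        rw [expand, e1, e2', hR, ← Finset.sum_sub_distrib, Finset.mul_sum, Finset.mul_sum]
        refine Finset.sum_congr rfl fun k _ => ?_
        rw [hρ k]
        ring
      calc (∏ i : Fin N, ∏ j ∈ Finset.Ioi i, (4 * Real.sinh ((s i - s j) / 2) ^ 2) ^ l)
          ≤ ∏ i : Fin N, ∏ j ∈ Finset.Ioi i, Real.exp (l * (s j - s i)) := by
            refine Finset.prod_le_prod (fun i _ => Finset.prod_nonneg fun j _ =>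
              Real.rpow_nonneg (by positivity) _) (fun i _ =>
                Finset.prod_le_prod (fun j _ => Real.rpow_nonneg (by positivity) _)
                  (fun j hj => hfac i j (Finset.mem_Ioi.mp hj)))
        _ = Real.exp (∑ i : Fin N, ∑ j ∈ Finset.Ioi i, l * (s j - s i)) := by
            rw [Real.exp_sum]
            exact Finset.prod_congr rfl fun i _ => (Real.exp_sum _ _).symm
        _ = Real.exp (-2 * R) := by rw [hid]
    -- assemble
    have hfb : ‖f s‖ ≤
        C * Real.exp R * (∏ k : Fin N, (1 + |s k|)) ^ (N ^ 2) := by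
      refine (hb s hs).trans ?_
      rw [hR]
      exact mul_le_mul_of_nonneg_left hPb (by positivity)
    have hnorm : ‖((∏ i : Fin N, ∏ j : Fin N, (2 * Real.cosh ((t i - s j) / 2)) ^ (-l) : ℝ) : ℂ) *
          f s *
          ((∏ i : Fin N, ∏ j ∈ Finset.Ioi i,
              (4 * Real.sinh ((s i - s j) / 2) ^ 2) ^ l : ℝ) : ℂ)‖ =
        (∏ i : Fin N, ∏ j : Fin N, (2 * Real.cosh ((t i - s j) / 2)) ^ (-l)) *
          ‖f s‖ *
          (∏ i : Fin N, ∏ j ∈ Finset.Ioi i, (4 * Real.sinh ((s i - s j) / 2) ^ 2) ^ l) := by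
      rw [norm_mul, norm_mul, Complex.norm_real, Complex.norm_real, Real.norm_eq_abs,
        Real.norm_eq_abs, abs_of_nonneg hKnn, abs_of_nonneg hWnn]
    have hE : l * N / 2 * T - l * N / 2 * Sm + R + (-2 * R) ≤ l * N / 2 * T - l / 2 * Sm := by
      have h1 : -R ≤ l * ((N : ℝ) - 1) / 2 * Sm := by
        rw [hR, hSm2, ← Finset.sum_neg_distrib, Finset.mul_sum]
        refine Finset.sum_le_sum fun k _ => ?_
        have hkN : ((k : ℕ) : ℝ) ≤ (N : ℝ) - 1 := by
          have h2 : ((k : ℕ) : ℝ) + 1 ≤ (N : ℝ) := by exact_mod_cast k.isLt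
          linarith
        have hk0 : (0:ℝ) ≤ ((k : ℕ) : ℝ) := Nat.cast_nonneg _
        have hk : |ρ k| ≤ l * ((N : ℝ) - 1) / 2 := by
          rw [hρ k, abs_mul, abs_of_nonneg (by positivity : (0:ℝ) ≤ l / 2)]
          have h3 : |(N : ℝ) - 1 - 2 * ((k : ℕ) : ℝ)| ≤ (N : ℝ) - 1 := by
            rw [abs_le]
            constructor <;> nlinarith
          nlinarith
        calc -(ρ k * s k) ≤ |ρ k * s k| := neg_le_abs _
          _ = |ρ k| * |s k| := abs_mul _ _
          _ ≤ l * ((N : ℝ) - 1) / 2 * |s k| :=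
            mul_le_mul_of_nonneg_right hk (abs_nonneg _)
      nlinarith
    have hSmnn : (0:ℝ) ≤ Sm := by
      rw [hSm2]; exact Finset.sum_nonneg fun k _ => abs_nonneg _
    have hsplit : Real.exp (l * N / 2 * T - l / 2 * Sm) =
        Real.exp (l * N / 2 * T) * ∏ k : Fin N, Real.exp (-(l / 2) * |s k|) := by
      rw [← Real.exp_sum, ← Real.exp_add]
      congr 1
      simp only [neg_mul]
      rw [hSm2, Finset.mul_sum Finset.univ (fun k : Fin N => |s k|) (l / 2), sub_eq_add_neg,
        ← Finset.sum_neg_distrib]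
    rw [hnorm]
    calc (∏ i : Fin N, ∏ j : Fin N, (2 * Real.cosh ((t i - s j) / 2)) ^ (-l)) *
          ‖f s‖ *
          (∏ i : Fin N, ∏ j ∈ Finset.Ioi i, (4 * Real.sinh ((s i - s j) / 2) ^ 2) ^ l)
        ≤ Real.exp (l * N / 2 * T - l * N / 2 * Sm) *
            (C * Real.exp R * (∏ k : Fin N, (1 + |s k|)) ^ (N ^ 2)) *
            Real.exp (-2 * R) := by
          refine mul_le_mul (mul_le_mul hKb hfb (norm_nonneg _) (Real.exp_nonneg _))
            hWb hWnn ?_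
          have : (0:ℝ) ≤ C * Real.exp R * (∏ k : Fin N, (1 + |s k|)) ^ (N ^ 2) := by positivity
          positivity
      _ = C * (∏ k : Fin N, (1 + |s k|)) ^ (N ^ 2) *
            Real.exp (l * N / 2 * T - l * N / 2 * Sm + R + (-2 * R)) := by
          rw [Real.exp_add, Real.exp_add]
          ring
      _ ≤ C * (∏ k : Fin N, (1 + |s k|)) ^ (N ^ 2) *
            Real.exp (l * N / 2 * T - l / 2 * Sm) := by
          refine mul_le_mul_of_nonneg_left (Real.exp_le_exp.mpr hE) ?_
          positivity
      _ = C * Real.exp (l * N / 2 * T) *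
            ∏ k : Fin N, ((1 + |s k|) ^ (N ^ 2) * Real.exp (-(l / 2) * |s k|)) := by
          rw [hsplit, Finset.prod_mul_distrib, ← Finset.prod_pow]
          ring
      _ ≤ C * Real.exp (l * N / 2 * T) *
            ∏ k : Fin N, (M * Real.exp (-(l / 4) * |s k|)) := by
          refine mul_le_mul_of_nonneg_left
            (Finset.prod_le_prod (fun k _ => by positivity) (fun k _ => ?_)) (by positivity)
          rw [hM]
          exact poly_le_exp_aux (by omega) hl (abs_nonneg (s k))
      _ = B * ∏ k : Fin N, Real.exp (-(l / 4) * |s k|) := by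
          rw [Finset.prod_mul_distrib, Finset.prod_const, Finset.card_univ, Fintype.card_fin,
            hB]
          ring
  refine Integrable.mono' hg.integrableOn hmeas.aestronglyMeasurable ?_
  rw [ae_restrict_iff' hSm]
  exact Filter.Eventually.of_forall fun s hs => key s hs
end

section
/- For λ ≥ 0 and t, s ∈ ℝ^N with t in the Weyl chamber G_N, define R_N(t,s) by ∏_{1 ≤ i < j ≤ N} (1 + e^{s_i − t_j})^{-λ}(1 + e^{t_i − s_j})^{-λ} = 1 + R_N(t,s). Fix α ∈ (0,1). Then there is a constant C > 0, independent of α, such that |R_N(t, s)| < C e^{(1 − α) m_N(t)} for all t, s ∈ G_N satisfying max_{1 ≤ i ≤ N} |s_i − t_i| < −α m_N(t), where m_N(t) = max_i (t_i − t_{i+1}). -/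
/-- `m_N(x) = max_{1 ≤ i ≤ N−1} (x_i − x_{i+1})`, for `N = n + 2`. -/
noncomputable def mN {n : ℕ} (x : Fin (n + 2) → ℝ) : ℝ :=
  Finset.univ.sup' Finset.univ_nonempty fun i : Fin (n + 1) => x i.castSucc - x i.succ

private lemma one_sub_prod_le_sum {ι : Type*} (S : Finset ι) (f : ι → ℝ)
    (h0 : ∀ i ∈ S, 0 ≤ f i) (h1 : ∀ i ∈ S, f i ≤ 1) :
    1 - ∏ i ∈ S, f i ≤ ∑ i ∈ S, (1 - f i) := by
  induction S using Finset.cons_induction with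
  | empty => simp
  | cons a S ha ih =>
    rw [Finset.prod_cons, Finset.sum_cons]
    have hP0 : 0 ≤ ∏ i ∈ S, f i :=
      Finset.prod_nonneg fun i hi => h0 i (Finset.mem_cons_of_mem hi)
    have hP1 : ∏ i ∈ S, f i ≤ 1 :=
      Finset.prod_le_one (fun i hi => h0 i (Finset.mem_cons_of_mem hi))
        (fun i hi => h1 i (Finset.mem_cons_of_mem hi))
    have ha0 : 0 ≤ f a := h0 a (Finset.mem_cons_self a S)
    have ha1 : f a ≤ 1 := h1 a (Finset.mem_cons_self a S)
    have := ih (fun i hi => h0 i (Finset.mem_cons_of_mem hi))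
      (fun i hi => h1 i (Finset.mem_cons_of_mem hi))
    nlinarith

private lemma rpow_neg_lower (y l : ℝ) (hy : 0 ≤ y) (hl : 0 ≤ l) :
    1 - l * y ≤ (1 + y) ^ (-l) := by
  have h1 : (0:ℝ) < 1 + y := by linarith
  rw [Real.rpow_def_of_pos h1]
  have hlog : Real.log (1 + y) ≤ y := by
    have := Real.log_le_sub_one_of_pos h1; linarith
  have hlog0 : 0 ≤ Real.log (1 + y) := Real.log_nonneg (by linarith)
  calc 1 - l * y ≤ -l * Real.log (1 + y) + 1 := by nlinarith
    _ ≤ Real.exp (-l * Real.log (1 + y)) := Real.add_one_le_exp _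
    _ = Real.exp (Real.log (1 + y) * (-l)) := by ring_nf

/-- With `R_N(t,s)` defined by
`∏_{i<j} (1 + e^{s_i − t_j})^{-λ} (1 + e^{t_i − s_j})^{-λ} = 1 + R_N(t,s)`,
there is `C > 0`, independent of `α ∈ (0,1)`, such that
`|R_N(t,s)| < C e^{(1−α) m_N(t)}` whenever `t, s ∈ G_N` and
`max_i |s_i − t_i| < −α m_N(t)`. -/
theorem remainder_bound (n : ℕ) (l : ℝ) (hl : 0 ≤ l) :
    ∃ C > 0, ∀ α : ℝ, 0 < α → α < 1 →
      ∀ t s : Fin (n + 2) → ℝ, StrictMono t → StrictMono s →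
        (∀ i, |s i - t i| < -(α * mN t)) →
        |(∏ i : Fin (n + 2), ∏ j ∈ Finset.Ioi i,
            (1 + Real.exp (s i - t j)) ^ (-l) * (1 + Real.exp (t i - s j)) ^ (-l)) - 1| <
          C * Real.exp ((1 - α) * mN t) := by
  refine ⟨2 * l * (n+2)^2 + 1, by positivity, ?_⟩
  intro α hα0 hα1 t s ht hs hst
  set m := mN t with hm
  set ε := Real.exp ((1 - α) * m) with hε
  have hε0 : 0 < ε := Real.exp_pos _
  -- t i - t j ≤ m for i < j
  have key : ∀ i j : Fin (n+2), i < j → t i - t j ≤ m := by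
    intro i j hij
    have hne : i ≠ Fin.last (n+1) := by
      intro h; subst h; exact absurd hij (by simpa using (Fin.le_last j).not_gt)
    obtain ⟨k, rfl⟩ := Fin.exists_castSucc_eq.mpr hne
    have hj : k.succ ≤ j := Fin.castSucc_lt_iff_succ_le.mp hij
    have h1 : t k.succ ≤ t j := ht.monotone hj
    have h2 : t k.castSucc - t k.succ ≤ m :=
      Finset.le_sup' (fun i : Fin (n+1) => t i.castSucc - t i.succ) (Finset.mem_univ k)
    linarith
  -- each exponent is ≤ (1-α) m
  have hexp : ∀ i j : Fin (n+2), i < j →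
      Real.exp (s i - t j) ≤ ε ∧ Real.exp (t i - s j) ≤ ε := by
    intro i j hij
    have hi := abs_lt.mp (hst i)
    have hj := abs_lt.mp (hst j)
    have hij' := key i j hij
    constructor
    · exact Real.exp_le_exp.mpr (by nlinarith [hi.2])
    · exact Real.exp_le_exp.mpr (by nlinarith [hj.1])
  -- bounds on each factor
  have factor_bd : ∀ x : ℝ, Real.exp x ≤ ε →
      1 - l * ε ≤ (1 + Real.exp x) ^ (-l) ∧ (1 + Real.exp x) ^ (-l) ≤ 1 := by
    intro x hx
    have he0 : 0 < Real.exp x := Real.exp_pos x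
    constructor
    · calc 1 - l * ε ≤ 1 - l * Real.exp x := by nlinarith
        _ ≤ _ := rpow_neg_lower _ l he0.le hl
    · exact Real.rpow_le_one_of_one_le_of_nonpos (by linarith) (by linarith)
  -- the pair factor
  set a : Fin (n+2) → Fin (n+2) → ℝ := fun i j =>
    (1 + Real.exp (s i - t j)) ^ (-l) * (1 + Real.exp (t i - s j)) ^ (-l) with ha
  have a_nonneg : ∀ i j, 0 ≤ a i j := fun i j => by positivity
  have a_le_one : ∀ i j, i < j → a i j ≤ 1 := by
    intro i j hij
    obtain ⟨h1, h2⟩ := hexp i j hij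
    have b1 := (factor_bd _ h1).2
    have b2 := (factor_bd _ h2).2
    have p1 : (0:ℝ) ≤ (1 + Real.exp (s i - t j)) ^ (-l) := by positivity
    have p2 : (0:ℝ) ≤ (1 + Real.exp (t i - s j)) ^ (-l) := by positivity
    calc a i j ≤ 1 * 1 := mul_le_mul b1 b2 p2 (by linarith)
      _ = 1 := by ring
  have a_lower : ∀ i j, i < j → 1 - a i j ≤ 2 * l * ε := by
    intro i j hij
    obtain ⟨h1, h2⟩ := hexp i j hij
    have b1 := (factor_bd _ h1)
    have b2 := (factor_bd _ h2)
    have hle : l * ε ≤ 1 ∨ 1 < l * ε := le_or_gt _ _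
    rcases hle with h | h
    · have hA0 : (0:ℝ) ≤ (1 + Real.exp (s i - t j)) ^ (-l) := by positivity
      have hmm := mul_le_mul b1.1 b2.1 (by linarith) hA0
      have hsq : 0 ≤ (l * ε) * (l * ε) := by positivity
      simp only [ha]
      nlinarith
    · have := a_nonneg i j; nlinarith
  -- inner product bounds
  have Q_nonneg : ∀ i, 0 ≤ ∏ j ∈ Finset.Ioi i, a i j :=
    fun i => Finset.prod_nonneg fun j _ => a_nonneg i j
  have Q_le_one : ∀ i, ∏ j ∈ Finset.Ioi i, a i j ≤ 1 :=
    fun i => Finset.prod_le_one (fun j _ => a_nonneg i j)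
      (fun j hj => a_le_one i j (Finset.mem_Ioi.mp hj))
  have Q_lower : ∀ i : Fin (n+2), 1 - ∏ j ∈ Finset.Ioi i, a i j ≤ (n+2) * (2 * l * ε) := by
    intro i
    calc 1 - ∏ j ∈ Finset.Ioi i, a i j
        ≤ ∑ j ∈ Finset.Ioi i, (1 - a i j) :=
          one_sub_prod_le_sum _ _ (fun j _ => a_nonneg i j)
            (fun j hj => a_le_one i j (Finset.mem_Ioi.mp hj))
      _ ≤ ∑ _j ∈ Finset.Ioi i, (2 * l * ε) :=
          Finset.sum_le_sum fun j hj => a_lower i j (Finset.mem_Ioi.mp hj)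
      _ = (Finset.Ioi i).card * (2 * l * ε) := by
          rw [Finset.sum_const, nsmul_eq_mul]
      _ ≤ (n+2) * (2 * l * ε) := by
          have hcard : (Finset.Ioi i).card ≤ n + 2 := by
            calc (Finset.Ioi i).card ≤ (Finset.univ : Finset (Fin (n+2))).card :=
              Finset.card_le_card (Finset.subset_univ _)
            _ = n + 2 := by simp
          have h2 : ((Finset.Ioi i).card : ℝ) ≤ (n+2 : ℝ) := by exact_mod_cast hcard
          have h3 : (0:ℝ) ≤ 2 * l * ε := by positivity
          calc ((Finset.Ioi i).card : ℝ) * (2 * l * ε) ≤ (n+2:ℝ) * (2 * l * ε) :=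
            mul_le_mul_of_nonneg_right h2 h3
          _ = (n+2) * (2 * l * ε) := by norm_num
  have P_lower : 1 - ∏ i : Fin (n+2), ∏ j ∈ Finset.Ioi i, a i j
      ≤ (n+2) * ((n+2) * (2 * l * ε)) := by
    calc 1 - ∏ i : Fin (n+2), ∏ j ∈ Finset.Ioi i, a i j
        ≤ ∑ i : Fin (n+2), (1 - ∏ j ∈ Finset.Ioi i, a i j) :=
          one_sub_prod_le_sum _ _ (fun i _ => Q_nonneg i) (fun i _ => Q_le_one i)
      _ ≤ ∑ _i : Fin (n+2), (n+2) * (2 * l * ε) :=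
          Finset.sum_le_sum fun i _ => Q_lower i
      _ = (n+2) * ((n+2) * (2 * l * ε)) := by
          rw [Finset.sum_const, nsmul_eq_mul]; simp
  have P_nonneg : 0 ≤ ∏ i : Fin (n+2), ∏ j ∈ Finset.Ioi i, a i j :=
    Finset.prod_nonneg fun i _ => Q_nonneg i
  have P_le_one : ∏ i : Fin (n+2), ∏ j ∈ Finset.Ioi i, a i j ≤ 1 :=
    Finset.prod_le_one (fun i _ => Q_nonneg i) (fun i _ => Q_le_one i)
  rw [abs_of_nonpos (by linarith)]
  have : (n+2:ℝ) * ((n+2) * (2 * l * ε)) = 2 * l * (n+2)^2 * ε := by ring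
  nlinarith [P_lower]
end
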